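/- (Pareto optimality is trivial.) Assume there are percepts e⁰, e¹ ∈ E with r(e⁰) = 0 and r(e¹) = 1. Then every policy π is Pareto optimal in the class of all CCSs: there is no policy π̃ such that V^{π̃}_ν(ϵ) ≥ V^π_ν(ϵ) for every CCS ν and V^{π̃}_ρ(ϵ) > V^π_ρ(ϵ) for at least one CCS ρ. -/

import Mathlib

open scoped Classical

/-- A history: a finite alternating sequence of action–percept pairs. -/
abbrev Hist (A E : Type*) := List (A × E)

/-- A policy maps histories to actions. -/
abbrev Policy (A E : Type*) := Hist A E → A

/-- A chronological conditional semimeasure (CCS, environment):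
values in `[0,1]`, and the chronological semimeasure condition. -/
structure CCS (A E : Type*) [Fintype E] where
  val : Hist A E → ℝ
  nonneg : ∀ h, 0 ≤ val h
  le_one : ∀ h, val h ≤ 1
  chrono : ∀ (h : Hist A E) (a : A), (∑ e : E, val (h ++ [(a, e)])) ≤ val h

/-- `Gam γ t = Γ_t = ∑_{i ≥ t} γ_i`, the discount normalization factor. -/
noncomputable def Gam (γ : ℕ → ℝ) (t : ℕ) : ℝ := ∑' i : ℕ, γ (t + i)

/-- Extend a history by a list of percepts, with actions chosen by the policy `π`. -/
def extendH {A E : Type*} (π : Policy A E) : Hist A E → List E → Hist A E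
  | h, [] => h
  | h, e :: es => extendH π (h ++ [(π h, e)]) es

/-- The value `V^π_ν(ae_{<t})` of policy `π` in environment `ν` given history `h = ae_{<t}`
(with `t = h.length + 1`); `0` whenever `Γ_t ≤ 0` or `ν(e_{<t} ∣ a_{<t}) ≤ 0`. -/
noncomputable def V {A E : Type*} [Fintype E] (γ : ℕ → ℝ) (r : E → ℝ)
    (π : Policy A E) (ν : CCS A E) (h : Hist A E) : ℝ :=
  if 0 < Gam γ (h.length + 1) ∧ 0 < ν.val h then
    (1 / (Gam γ (h.length + 1) * ν.val h)) *
      ∑' n : ℕ, γ (h.length + 1 + n) *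
        ∑ es : Fin (n + 1) → E,
          r (es (Fin.last n)) * ν.val (extendH π h (List.ofFn es))
  else 0

/-- The value `V^π_ν(h a)` of a history ending in the action `a`:
the action at time `t` is `a`, and `π` is followed from time `t+1` on. -/
noncomputable def Vact {A E : Type*} [Fintype E] (γ : ℕ → ℝ) (r : E → ℝ)
    (π : Policy A E) (ν : CCS A E) (h : Hist A E) (a : A) : ℝ :=
  V γ r (fun h' => if h' = h then a else π h') ν h

/-- The optimal value `V^*_ν(h) = sup_π V^π_ν(h)`. -/
noncomputable def VOpt {A E : Type*} [Fintype E] (γ : ℕ → ℝ) (r : E → ℝ)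
    (ν : CCS A E) (h : Hist A E) : ℝ :=
  ⨆ π : Policy A E, V γ r π ν h

/-- The optimal value `V^*_ν(h a)` of a history ending in an action. -/
noncomputable def VOptAct {A E : Type*} [Fintype E] (γ : ℕ → ℝ) (r : E → ℝ)
    (ν : CCS A E) (h : Hist A E) (a : A) : ℝ :=
  ⨆ π : Policy A E, Vact γ r π ν h a

/-- A history is consistent with `π` iff each of its actions is the one chosen by `π`. -/
def Consistent {A E : Type*} (π : Policy A E) (h : Hist A E) : Prop :=
  ∀ (k : ℕ) (hk : k < h.length), (h.get ⟨k, hk⟩).1 = π (h.take k)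

/-!
If `πt` is nowhere worse than `π` but strictly better in some `ρ`, the two policies must act
differently after some history `h` that both generate from the same percepts, at a time of positive
discount weight. The deterministic environment that replays the percepts of `h` and then emits
the reward-1 percept forever if the action taken at `h` was `π`'s, and the reward-0 percept forever
otherwise, gives `π` strictly more value than `πt`.
-/

section Interaction

variable {A E : Type*}

lemma extendH_append (P : Policy A E) (h : Hist A E) (l : List E) (e : E) :
    extendH P h (l ++ [e]) = extendH P h l ++ [(P (extendH P h l), e)] := by
  induction l generalizing h with
  | nil => rfl
  | cons x xs ih => exact ih _

lemma map_snd_extendH (P : Policy A E) (h : Hist A E) (l : List E) :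
    (extendH P h l).map Prod.snd = h.map Prod.snd ++ l := by
  induction l using List.reverseRecOn with
  | nil => simp [extendH]
  | append_singleton l e ih => simp [extendH_append, ih]

lemma extendH_injective (P : Policy A E) (h : Hist A E) : Function.Injective (extendH P h) :=
  fun l l' hl => by simpa [map_snd_extendH] using congrArg (List.map Prod.snd) hl

lemma exists_extendH_eq_and_ne_of_extendH_ne {π πt : Policy A E} {h : Hist A E} {l : List E}
    (hne : extendH π h l ≠ extendH πt h l) :
    ∃ l' : List E, l'.length < l.length ∧ extendH π h l' = extendH πt h l' ∧
      π (extendH π h l') ≠ πt (extendH π h l') := by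
  induction l using List.reverseRecOn with
  | nil => exact absurd rfl hne
  | append_singleton l e ih =>
    by_cases heq : extendH π h l = extendH πt h l
    · refine ⟨l, by simp, heq, fun hact => hne ?_⟩
      rw [extendH_append, extendH_append, ← heq, hact]
    · obtain ⟨l', hlen, hl'⟩ := ih heq
      exact ⟨l', by simp; omega, hl'⟩

lemma V_congr_of_extendH_eq [Fintype E] {γ : ℕ → ℝ} {r : E → ℝ} {π πt : Policy A E}
    {ν : CCS A E} {h : Hist A E}
    (H : ∀ n, γ (h.length + 1 + n) ≠ 0 →
      ∀ es : Fin (n + 1) → E, extendH π h (List.ofFn es) = extendH πt h (List.ofFn es)) :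
    V γ r π ν h = V γ r πt ν h := by
  unfold V
  congr 3
  funext n
  by_cases hn : γ (h.length + 1 + n) = 0
  · simp [hn]
  · simp_rw [H n hn]

end Interaction

section Deterministic

variable {A E : Type*}

def detHist (f : Hist A E → A → E) (as : List A) : Hist A E :=
  as.foldl (fun h a => h ++ [(a, f h a)]) []

lemma detHist_append (f : Hist A E → A → E) (as : List A) (a : A) :
    detHist f (as ++ [a]) = detHist f as ++ [(a, f (detHist f as) a)] := by
  simp [detHist]

def Follows (f : Hist A E → A → E) (h : Hist A E) : Prop :=
  h = detHist f (h.map Prod.fst)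

lemma follows_nil (f : Hist A E → A → E) : Follows f [] := rfl

lemma follows_append_iff (f : Hist A E → A → E) (h : Hist A E) (a : A) (e : E) :
    Follows f (h ++ [(a, e)]) ↔ Follows f h ∧ e = f h a := by
  rw [Follows, List.map_append, List.map_singleton, detHist_append,
    List.append_singleton_inj, Prod.mk.injEq]
  exact and_congr_right fun hh : Follows f h => by rw [← hh]; simp

noncomputable def detEnv [Fintype E] (f : Hist A E → A → E) : CCS A E where
  val h := if Follows f h then 1 else 0
  nonneg h := by split <;> norm_num
  le_one h := by split <;> norm_num
  chrono h a := by
    by_cases hh : Follows f h <;> simp [follows_append_iff, hh]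

end Deterministic

section Trajectory

variable {A E : Type*} (P : Policy A E) (f : Hist A E → A → E)

def traj : ℕ → Hist A E
  | 0 => []
  | m + 1 => traj m ++ [(P (traj m), f (traj m) (P (traj m)))]

def percept (m : ℕ) : E := f (traj P f m) (P (traj P f m))

lemma traj_succ (m : ℕ) : traj P f (m + 1) = traj P f m ++ [(P (traj P f m), percept P f m)] :=
  rfl

lemma traj_length (m : ℕ) : (traj P f m).length = m := by
  induction m with
  | zero => rfl
  | succ m ih => simp [traj_succ, ih]

lemma traj_eq_extendH (m : ℕ) :
    traj P f m = extendH P [] (List.ofFn fun i : Fin m => percept P f i) := by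
  induction m with
  | zero => rfl
  | succ m ih =>
    rw [List.ofFn_succ', List.concat_eq_append, extendH_append]
    simp only [Fin.val_castSucc, Fin.val_last, ← ih, traj_succ]

lemma map_fst_traj_getElem? {i m : ℕ} (hi : i < m) :
    ((traj P f m).map Prod.fst)[i]? = some (P (traj P f i)) := by
  induction m with
  | zero => omega
  | succ m ih =>
    rcases Nat.lt_succ_iff_lt_or_eq.mp hi with hi | rfl
    · simp [traj_succ, List.getElem?_append_left, traj_length, hi, ← ih hi]
    · simp [traj_succ, traj_length]

lemma follows_extendH_iff (l : List E) :
    Follows f (extendH P [] l) ↔ extendH P [] l = traj P f l.length := by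
  induction l using List.reverseRecOn with
  | nil => exact iff_of_true (follows_nil f) rfl
  | append_singleton l e ih =>
    rw [extendH_append, follows_append_iff, ih]
    simp only [List.length_append, List.length_singleton, traj_succ, List.append_singleton_inj,
      Prod.mk.injEq]
    exact and_congr_right fun hl => by simp [hl, percept]

end Trajectory

section Value

variable {A E : Type*} [Fintype E] (P : Policy A E) (f : Hist A E → A → E)

lemma detEnv_val_extendH_ofFn {n : ℕ} (es : Fin n → E) :
    (detEnv f).val (extendH P [] (List.ofFn es)) =
      if es = fun i : Fin n => percept P f i then 1 else 0 := by
  simp only [detEnv, follows_extendH_iff, List.length_ofFn, traj_eq_extendH,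
    (extendH_injective P []).eq_iff, List.ofFn_inj]

lemma V_detEnv (γ : ℕ → ℝ) (r : E → ℝ) (hΓ : 0 < Gam γ 1) :
    V γ r P (detEnv f) [] = (Gam γ 1)⁻¹ * ∑' m, γ (1 + m) * r (percept P f m) := by
  have hnil : (detEnv f).val [] = 1 := if_pos (follows_nil f)
  rw [V, if_pos ⟨hΓ, by simp [hnil]⟩]
  simp only [hnil, List.length_nil, zero_add, mul_one, one_div, detEnv_val_extendH_ofFn, mul_ite,
    mul_zero, Finset.sum_ite_eq', Finset.mem_univ, if_true, Fin.val_last]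

lemma V_detEnv_lt {γ : ℕ → ℝ} (hγ0 : ∀ t, 0 ≤ γ t) (hγs : Summable γ)
    {r : E → ℝ} (hr : ∀ e, 0 ≤ r e ∧ r e ≤ 1) {P Q : Policy A E} {n : ℕ} (hγn : 0 < γ (1 + n))
    (hle : ∀ m, r (percept Q f m) ≤ r (percept P f m))
    (hlt : r (percept Q f n) < r (percept P f n)) :
    V γ r Q (detEnv f) [] < V γ r P (detEnv f) [] := by
  have hγs1 : Summable fun m => γ (1 + m) := by
    simpa [add_comm] using (summable_nat_add_iff 1).mpr hγs
  have hΓ : 0 < Gam γ 1 := hγn.trans_le (hγs1.le_tsum n fun j _ => hγ0 _)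
  have hsum (R : Policy A E) : Summable fun m => γ (1 + m) * r (percept R f m) :=
    hγs1.of_nonneg_of_le (fun m => mul_nonneg (hγ0 _) (hr _).1)
      (fun m => mul_le_of_le_one_right (hγ0 _) (hr _).2)
  rw [V_detEnv P f γ r hΓ, V_detEnv Q f γ r hΓ]
  refine mul_lt_mul_of_pos_left ?_ (inv_pos.mpr hΓ)
  exact (hsum Q).tsum_lt_tsum (fun m => mul_le_mul_of_nonneg_left (hle m) (hγ0 _))
    (mul_lt_mul_of_pos_left hlt hγn) (hsum P)

end Value

section Test

variable {A E : Type*}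

-- `(h.map Prod.fst ++ [b])[l.length]?` is the action taken right after the replay of `l`.
noncomputable def replayThenTest (l : List E) (a : A) (e₀ e₁ : E) (h : Hist A E) (b : A) : E :=
  if h.length < l.length then l.getD h.length e₀
  else if (h.map Prod.fst ++ [b])[l.length]? = some a then e₁ else e₀

variable (P : Policy A E) (l : List E) (a : A) (e₀ e₁ : E)

lemma percept_replayThenTest_of_lt {m : ℕ} (hm : m < l.length) :
    percept P (replayThenTest l a e₀ e₁) m = l.getD m e₀ := by
  rw [percept, replayThenTest, traj_length, if_pos hm]

lemma traj_replayThenTest_length :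
    traj P (replayThenTest l a e₀ e₁) l.length = extendH P [] l := by
  rw [traj_eq_extendH]
  congr
  conv_rhs => rw [← List.ofFn_getElem (xs := l)]
  simp [percept_replayThenTest_of_lt]

lemma percept_replayThenTest_of_le {m : ℕ} (hm : l.length ≤ m) :
    percept P (replayThenTest l a e₀ e₁) m = if P (extendH P [] l) = a then e₁ else e₀ := by
  have hact := map_fst_traj_getElem? P (replayThenTest l a e₀ e₁) (Nat.lt_succ_of_le hm)
  rw [traj_replayThenTest_length, traj_succ, List.map_append, List.map_singleton] at hact
  rw [percept, replayThenTest, traj_length, if_neg hm.not_gt, hact]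
  simp only [Option.some_inj]

end Test

theorem pareto_optimality_is_trivial_general {A E : Type*} [Fintype E]
    (γ : ℕ → ℝ) (hγ0 : ∀ t, 0 ≤ γ t) (hγs : Summable γ)
    (r : E → ℝ) (hr : ∀ e : E, 0 ≤ r e ∧ r e ≤ 1)
    (e0 e1 : E) (hr0 : r e0 = 0) (hr1 : r e1 = 1)
    (π : Policy A E) :
    ¬ ∃ πt : Policy A E,
        (∀ ν : CCS A E, V γ r π ν [] ≤ V γ r πt ν []) ∧
        ∃ ρ : CCS A E, V γ r π ρ [] < V γ r πt ρ [] := by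
  rintro ⟨πt, hle, ρ, hlt⟩
  obtain ⟨n, hγn, es, hne⟩ : ∃ n, γ (1 + n) ≠ 0 ∧
      ∃ es : Fin (n + 1) → E, extendH π [] (List.ofFn es) ≠ extendH πt [] (List.ofFn es) := by
    by_contra! H
    exact hlt.ne (V_congr_of_extendH_eq fun n hn => H n (by simpa using hn))
  obtain ⟨l, hl, heq, hact⟩ := exists_extendH_eq_and_ne_of_extendH_ne hne
  set f := replayThenTest l (π (extendH π [] l)) e0 e1
  have hπ (m) (hm : l.length ≤ m) : percept π f m = e1 := by
    rw [percept_replayThenTest_of_le _ _ _ _ _ hm, if_pos rfl]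
  have hπt (m) (hm : l.length ≤ m) : percept πt f m = e0 := by
    rw [percept_replayThenTest_of_le _ _ _ _ _ hm, ← heq, if_neg (Ne.symm hact)]
  have hn : l.length ≤ n := by simpa [Nat.lt_succ_iff] using hl
  refine (hle (detEnv f)).not_gt
    (V_detEnv_lt f hγ0 hγs hr ((hγ0 _).lt_of_ne' hγn) (fun m => ?_) ?_)
  · rcases lt_or_ge m l.length with hm | hm
    · simp only [f, percept_replayThenTest_of_lt _ _ _ _ _ hm, le_refl]
    · rw [hπ m hm, hπt m hm, hr0, hr1]; exact zero_le_one
  · rw [hπ n hn, hπt n hn, hr0, hr1]; exact zero_lt_one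

/-- **Pareto optimality is trivial**: every policy is Pareto optimal in the class of
all CCSs. -/
theorem pareto_optimality_is_trivial {A E : Type*} [Fintype A] [Nonempty A] [Fintype E] [Nonempty E]
    (γ : ℕ → ℝ) (hγ0 : ∀ t, 0 ≤ γ t) (hγs : Summable γ)
    (r : E → ℝ) (hr : ∀ e : E, 0 ≤ r e ∧ r e ≤ 1)
    (e0 e1 : E) (hr0 : r e0 = 0) (hr1 : r e1 = 1)
    (π : Policy A E) :
    ¬ ∃ πt : Policy A E,
        (∀ ν : CCS A E, V γ r π ν [] ≤ V γ r πt ν []) ∧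
        ∃ ρ : CCS A E, V γ r π ρ [] < V γ r πt ρ [] :=
  pareto_optimality_is_trivial_general γ hγ0 hγs r hr e0 e1 hr0 hr1 π
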